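/- Let S be a finite left regular band satisfying condition (CC): for all a, b with ab = a and ba = b, if a and b are connected by a zig-zag in the poset S_{a,b} = {s : sa = sb} (ordered by x ≤ y iff yx = x, using only elements of S_{a,b}), then a = b. Then for any two distinct elements x, y ∈ S there is a semigroup homomorphism φ : S → L with φ(x) ≠ φ(y), where L = {0,+,−} has 0 an identity and +, − left zeros. Consequently S embeds in L^n for some n. -/
import Mathlib


/-- L = {0,+,−} with 0 an identity and +, − left zeros. -/
inductive L : Type
  | zero | pos | neg
deriving DecidableEq

instance : Mul L :=
  ⟨fun a b => match a with
    | .zero => b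
    | .pos => .pos
    | .neg => .neg⟩

private lemma sepAux : ∀ (n : ℕ) (S : Type*) [Semigroup S] [Fintype S],
    Fintype.card S ≤ n →
    (∀ x : S, x * x = x) → (∀ x y : S, x * y * x = x * y) →
    (∀ a b : S, a * b = a → b * a = b →
      Relation.EqvGen
        (fun x y : S => x * a = x * b ∧ y * a = y * b ∧ y * x = x) a b → a = b) →
    ∀ x y : S, x ≠ y → ∃ φ : S → L,
      (∀ a b : S, φ (a * b) = φ a * φ b) ∧ φ x ≠ φ y := by
  intro n
  induction n with
  | zero =>
    intro S _ _ hcard _ _ _ x y _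
    exact ((Fintype.card_eq_zero_iff.mp (Nat.le_zero.mp hcard)).false x).elim
  | succ n ih =>
    intro S instS instF hcard idem lrb CC x y hne
    classical
    by_cases hxy : x * y = x
    · by_cases hyx : y * x = y
      · by_cases hex : ∃ s₀ : S, s₀ * x ≠ s₀ * y ∧ ∃ t, s₀ * t ≠ t
        · -- recurse on the sub-band s₀ * S
          obtain ⟨s₀, hsxy, t₀, ht₀⟩ := hex
          letI : Semigroup {z : S // ∃ u, s₀ * u = z} :=
            { mul := fun a b => ⟨a.1 * b.1, by
                obtain ⟨u, hu⟩ := a.2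
                exact ⟨u * b.1, by rw [← mul_assoc, hu]⟩⟩
              mul_assoc := fun a b c => Subtype.ext (mul_assoc a.1 b.1 c.1) }
          have hcard' : Fintype.card {z : S // ∃ u, s₀ * u = z} ≤ n := by
            have hlt : Fintype.card {z : S // ∃ u, s₀ * u = z} < Fintype.card S := by
              apply Fintype.card_subtype_lt (x := t₀)
              rintro ⟨u, hu⟩
              apply ht₀
              rw [← hu, ← mul_assoc, idem]
            omega
          obtain ⟨φ', hhom', hsep'⟩ := ih {z : S // ∃ u, s₀ * u = z} hcard'
            (fun a => Subtype.ext (idem a.1))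
            (fun a b => Subtype.ext (lrb a.1 b.1))
            (fun a b hab hba h => by
              have key : ∀ u v : {z : S // ∃ u, s₀ * u = z},
                  Relation.EqvGen
                    (fun p q => p * a = p * b ∧ q * a = q * b ∧ q * p = p) u v →
                  Relation.EqvGen
                    (fun p q : S => p * a.1 = p * b.1 ∧ q * a.1 = q * b.1 ∧ q * p = p)
                    u.1 v.1 := by
                intro u v h
                induction h with
                | rel u v h =>
                  exact .rel _ _ ⟨congrArg Subtype.val h.1, congrArg Subtype.val h.2.1,
                    congrArg Subtype.val h.2.2⟩
                | refl u => exact .refl _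
                | symm u v _ ih2 => exact .symm _ _ ih2
                | trans u v w _ _ ih1 ih2 => exact .trans _ _ _ ih1 ih2
              exact Subtype.ext (CC a.1 b.1 (congrArg Subtype.val hab)
                (congrArg Subtype.val hba) (key a b h)))
            ⟨s₀ * x, x, rfl⟩ ⟨s₀ * y, y, rfl⟩
            (fun h => hsxy (congrArg Subtype.val h))
          refine ⟨fun s => φ' ⟨s₀ * s, s, rfl⟩, ?_, hsep'⟩
          intro a b
          beta_reduce
          have hkey : (⟨s₀ * (a * b), a * b, rfl⟩ : {z : S // ∃ u, s₀ * u = z})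
              = ⟨s₀ * a, a, rfl⟩ * ⟨s₀ * b, b, rfl⟩ := by
            apply Subtype.ext
            show s₀ * (a * b) = (s₀ * a) * (s₀ * b)
            rw [← mul_assoc (s₀ * a) s₀ b, lrb s₀ a, mul_assoc]
          rw [hkey]
          exact hhom' _ _
        · -- every s with s*x ≠ s*y is a left identity
          push_neg at hex
          have hnotconn : ¬ Relation.EqvGen
              (fun u v : S => u * x = u * y ∧ v * x = v * y ∧ v * u = u) x y :=
            fun h => hne (CC x y hxy hyx h)
          refine ⟨fun s => if s * x = s * y then
              (if Relation.EqvGen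
                  (fun u v : S => u * x = u * y ∧ v * x = v * y ∧ v * u = u) s y
               then L.neg else L.pos)
            else L.zero, ?_, ?_⟩
          · intro a b
            beta_reduce
            by_cases hA : a * x = a * y
            · have hab : (a * b) * x = (a * b) * y := by
                by_cases hB : b * x = b * y
                · rw [mul_assoc, hB, mul_assoc]
                · have hid := hex b hB
                  rw [mul_assoc, mul_assoc, hid, hid]
                  exact hA
              have step : Relation.EqvGen
                  (fun u v : S => u * x = u * y ∧ v * x = v * y ∧ v * u = u) (a * b) a :=
                .rel _ _ ⟨hab, hA, by rw [← mul_assoc, idem]⟩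
              have hiff : Relation.EqvGen
                  (fun u v : S => u * x = u * y ∧ v * x = v * y ∧ v * u = u) (a * b) y ↔
                  Relation.EqvGen
                  (fun u v : S => u * x = u * y ∧ v * x = v * y ∧ v * u = u) a y :=
                ⟨fun h => .trans _ _ _ (.symm _ _ step) h, fun h => .trans _ _ _ step h⟩
              by_cases hE : Relation.EqvGen
                  (fun u v : S => u * x = u * y ∧ v * x = v * y ∧ v * u = u) a y
              · rw [if_pos hab, if_pos hA, if_pos (hiff.mpr hE), if_pos hE]; rfl
              · rw [if_pos hab, if_pos hA, if_neg (fun h => hE (hiff.mp h)), if_neg hE]; rfl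
            · have hid := hex a hA
              rw [hid (b), if_neg hA]
              rfl
          · beta_reduce
            have hx' : x * x = x * y := by rw [idem, hxy]
            have hy' : y * x = y * y := by rw [idem, hyx]
            rw [if_pos hx', if_pos hy', if_neg hnotconn,
              if_pos (Relation.EqvGen.refl y)]
            decide
      · -- y * x ≠ y
        refine ⟨fun s => if y * s = y then L.zero else L.pos, ?_, ?_⟩
        · intro a b
          beta_reduce
          by_cases ha : y * a = y
          · by_cases hb : y * b = y
            · have h : y * (a * b) = y := by rw [← mul_assoc, ha, hb]
              rw [if_pos h, if_pos ha, if_pos hb]; rfl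
            · have h : y * (a * b) ≠ y := by rw [← mul_assoc, ha]; exact hb
              rw [if_neg h, if_pos ha, if_neg hb]; rfl
          · have h : y * (a * b) ≠ y := by
              intro hcontra
              apply ha
              calc y * a = y * (a * b) * a := by rw [hcontra]
                _ = y * (a * b) := by rw [mul_assoc, lrb]
                _ = y := hcontra
            rw [if_neg h, if_neg ha]; rfl
        · beta_reduce
          rw [if_neg hyx, if_pos (idem y)]
          decide
    · -- x * y ≠ x
      refine ⟨fun s => if x * s = x then L.zero else L.pos, ?_, ?_⟩
      · intro a b
        beta_reduce
        by_cases ha : x * a = x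
        · by_cases hb : x * b = x
          · have h : x * (a * b) = x := by rw [← mul_assoc, ha, hb]
            rw [if_pos h, if_pos ha, if_pos hb]; rfl
          · have h : x * (a * b) ≠ x := by rw [← mul_assoc, ha]; exact hb
            rw [if_neg h, if_pos ha, if_neg hb]; rfl
        · have h : x * (a * b) ≠ x := by
            intro hcontra
            apply ha
            calc x * a = x * (a * b) * a := by rw [hcontra]
              _ = x * (a * b) := by rw [mul_assoc, lrb]
              _ = x := hcontra
          rw [if_neg h, if_neg ha]; rfl
      · beta_reduce
        rw [if_pos (idem x), if_neg hxy]
        decide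

/-- A finite left regular band satisfying condition (CC) has points separated by
homomorphisms into L, and hence embeds in a finite power of L. -/
theorem CC_implies_embeds_in_power_of_L (S : Type*) [Semigroup S] [Fintype S]
    (idem : ∀ x : S, x * x = x) (lrb : ∀ x y : S, x * y * x = x * y)
    (CC : ∀ a b : S, a * b = a → b * a = b →
      Relation.EqvGen
        (fun x y : S => x * a = x * b ∧ y * a = y * b ∧ y * x = x) a b → a = b) :
    (∀ x y : S, x ≠ y → ∃ φ : S → L,
      (∀ a b : S, φ (a * b) = φ a * φ b) ∧ φ x ≠ φ y) ∧
    (∃ n : ℕ, ∃ ψ : S → Fin n → L,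
      (∀ a b : S, ψ (a * b) = ψ a * ψ b) ∧ Function.Injective ψ) := by
  classical
  have sep : ∀ x y : S, x ≠ y → ∃ φ : S → L,
      (∀ a b : S, φ (a * b) = φ a * φ b) ∧ φ x ≠ φ y :=
    sepAux (Fintype.card S) S le_rfl idem lrb CC
  refine ⟨sep, ?_⟩
  let e := Fintype.equivFin (S × S)
  let Φ : S × S → S → L := fun p =>
    if h : p.1 ≠ p.2 then Classical.choose (sep p.1 p.2 h) else fun _ => L.pos
  have hΦhom : ∀ p (a b : S), Φ p (a * b) = Φ p a * Φ p b := by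
    intro p a b
    by_cases h : p.1 ≠ p.2
    · simp only [Φ, dif_pos h]
      exact (Classical.choose_spec (sep p.1 p.2 h)).1 a b
    · simp only [Φ, dif_neg h]
      rfl
  have hΦsep : ∀ a b : S, (h : a ≠ b) → Φ (a, b) a ≠ Φ (a, b) b := by
    intro a b h
    simp only [Φ, dif_pos (show (a, b).1 ≠ (a, b).2 from h)]
    exact (Classical.choose_spec (sep a b h)).2
  refine ⟨Fintype.card (S × S), fun s i => Φ (e.symm i) s, ?_, ?_⟩
  · intro a b
    funext i
    exact hΦhom (e.symm i) a b
  · intro a b hab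
    by_contra hne
    have := congrFun hab (e (a, b))
    simp only [Equiv.symm_apply_apply] at this
    exact hΦsep a b hne this
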